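/- arXiv:2303.10567 — 2 statements merged into one kernel-verified Lean document; each statement's English description precedes it below -/
import Mathlib

section
/- Let k ≥ 1, and let Λ₁, …, Λ_k, D₁, …, D_k, K₁, …, K_k, M be symmetric positive definite real n×n matrices. Let y₁, …, y_k : [0,∞) → ℝⁿ be C² curves satisfying Λᵢ·yᵢ'' + Dᵢ·yᵢ' + Kᵢ·yᵢ = F for each i, where F(t) = −M·Σⱼ yⱼ''(t). Then the total storage function S_tot(t) = Σᵢ [½·yᵢ'ᵀΛᵢ·yᵢ' + ½·yᵢᵀKᵢ·yᵢ] + ½·(Σᵢ yᵢ')ᵀM·(Σᵢ yᵢ') satisfies S_tot'(t) ≤ −Σᵢ λ_min(Dᵢ)·‖yᵢ'(t)‖² ≤ 0 for all t ≥ 0. (Dissipation inequality for collaborative grasping by an arbitrary number of AMs, the extension of Theorem 3 described in Section III.D.1 via repeated passivity-preserving feedback interconnection.) -/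
open Matrix Filter Topology

/-- The minimum eigenvalue of a Hermitian (here: real symmetric) matrix. -/
noncomputable def lamMin {n : ℕ} {D : Matrix (Fin n) (Fin n) ℝ}
    (hD : D.IsHermitian) : ℝ := ⨅ i, hD.eigenvalues i

/-!
Differentiating the storage function gives the power supplied to the springs and inertias of the
manipulators plus the power `(∑ᵢ yᵢ')ᵀ M (∑ᵢ yᵢ'')` absorbed by the object. Pairing each impedance
equation with `yᵢ'` turns the former into `(∑ᵢ yᵢ')ᵀ F − ∑ᵢ yᵢ'ᵀ Dᵢ yᵢ'`, and `F = −M ∑ᵢ yᵢ''`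
makes the interconnection lossless, so `S_tot' = −∑ᵢ yᵢ'ᵀ Dᵢ yᵢ'`. The Rayleigh bound
`λ_min(D) ‖x‖² ≤ xᵀ D x` finishes the proof.
-/

theorem Matrix.IsSymm.dotProduct_mulVec_comm {ι R : Type*} [Fintype ι] [CommSemiring R]
    {A : Matrix ι ι R} (hA : A.IsSymm) (x z : ι → R) : x ⬝ᵥ (A *ᵥ z) = z ⬝ᵥ (A *ᵥ x) := by
  rw [dotProduct_mulVec, ← mulVec_transpose, hA.eq, dotProduct_comm]

open MatrixOrder in
theorem lamMin_mul_dotProduct_self_le {n : ℕ} {D : Matrix (Fin n) (Fin n) ℝ}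
    (hD : D.IsHermitian) (x : Fin n → ℝ) : lamMin hD * (x ⬝ᵥ x) ≤ x ⬝ᵥ (D *ᵥ x) := by
  have hle : algebraMap ℝ _ (lamMin hD) ≤ D := by
    rw [algebraMap_le_iff_le_spectrum hD.isSelfAdjoint, hD.spectrum_real_eq_range_eigenvalues]
    rintro _ ⟨i, rfl⟩
    exact ciInf_le (Set.finite_range _).bddBelow i
  simpa [sub_mulVec, Algebra.algebraMap_eq_smul_one, smul_mulVec, dotProduct_sub] using
    (Matrix.le_iff.mp hle).dotProduct_mulVec_nonneg x

theorem lamMin_nonneg {n : ℕ} {D : Matrix (Fin n) (Fin n) ℝ} (hD : D.PosSemidef) :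
    0 ≤ lamMin hD.isHermitian :=
  Real.iInf_nonneg hD.eigenvalues_nonneg

section Deriv

variable {𝕜 ι κ : Type*} [NontriviallyNormedField 𝕜] [Fintype ι]
  {f g : 𝕜 → ι → 𝕜} {f' g' : ι → 𝕜} {t : 𝕜}

theorem HasDerivAt.dotProduct (hf : HasDerivAt f f' t) (hg : HasDerivAt g g' t) :
    HasDerivAt (fun s => f s ⬝ᵥ g s) (f' ⬝ᵥ g t + f t ⬝ᵥ g') t := by
  simp only [_root_.dotProduct, ← Finset.sum_add_distrib]
  exact HasDerivAt.fun_sum fun i _ => (hasDerivAt_pi.mp hf i).mul (hasDerivAt_pi.mp hg i)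

theorem HasDerivAt.mulVec (A : Matrix κ ι 𝕜) (hf : HasDerivAt f f' t) :
    HasDerivAt (fun s => A *ᵥ f s) (A *ᵥ f') t :=
  hasDerivAt_pi.mpr fun i => ((hasDerivAt_const t (A i)).dotProduct hf).congr_deriv <| by
    rw [zero_dotProduct, zero_add]
    rfl

theorem HasDerivAt.half_dotProduct_mulVec_self [CharZero 𝕜] {A : Matrix ι ι 𝕜} (hA : A.IsSymm)
    (hf : HasDerivAt f f' t) :
    HasDerivAt (fun s => 1 / 2 * (f s ⬝ᵥ (A *ᵥ f s))) (f t ⬝ᵥ (A *ᵥ f')) t := by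
  have h := (hf.dotProduct (hf.mulVec A)).const_mul (1 / 2)
  rwa [hA.dotProduct_mulVec_comm f', ← two_mul, ← mul_assoc, one_div_mul_cancel two_ne_zero,
    one_mul] at h

end Deriv

theorem sum_power_add_load_power_eq_neg_dissipation {ι m R : Type*} [Fintype ι] [Fintype m]
    [CommRing R] {Λ D K : ι → Matrix m m R} {M : Matrix m m R} (hK : ∀ i, (K i).IsSymm)
    {x v a : ι → m → R} {F : m → R} (hF : F = -(M *ᵥ ∑ i, a i))
    (hODE : ∀ i, Λ i *ᵥ a i + D i *ᵥ v i + K i *ᵥ x i = F) :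
    ∑ i, (v i ⬝ᵥ (Λ i *ᵥ a i) + x i ⬝ᵥ (K i *ᵥ v i)) + (∑ i, v i) ⬝ᵥ (M *ᵥ ∑ i, a i)
      = -∑ i, v i ⬝ᵥ (D i *ᵥ v i) := by
  have hpower : ∀ i, v i ⬝ᵥ (Λ i *ᵥ a i) + x i ⬝ᵥ (K i *ᵥ v i)
      = v i ⬝ᵥ F - v i ⬝ᵥ (D i *ᵥ v i) := fun i => by
    rw [(hK i).dotProduct_mulVec_comm, ← hODE i, dotProduct_add, dotProduct_add]
    ring
  have hload : (∑ i, v i) ⬝ᵥ (M *ᵥ ∑ i, a i) = -((∑ i, v i) ⬝ᵥ F) := by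
    rw [hF, dotProduct_neg, neg_neg]
  rw [Finset.sum_congr rfl fun i _ => hpower i, Finset.sum_sub_distrib, hload,
    ← sum_dotProduct]
  ring

theorem stmt_12_general {n k : ℕ}
    (Λ D K : Fin k → Matrix (Fin n) (Fin n) ℝ) (M : Matrix (Fin n) (Fin n) ℝ)
    (hΛ : ∀ i, (Λ i).PosDef) (hD : ∀ i, (D i).PosDef) (hK : ∀ i, (K i).PosDef)
    (hM : M.PosDef)
    (y : Fin k → ℝ → Fin n → ℝ) (hy : ∀ i, ContDiff ℝ 2 (y i))
    (F : ℝ → Fin n → ℝ)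
    (hF : ∀ t : ℝ, F t = -(M *ᵥ (∑ j, deriv (deriv (y j)) t)))
    (hODE : ∀ i, ∀ t : ℝ, 0 ≤ t →
      Λ i *ᵥ (deriv (deriv (y i)) t) + D i *ᵥ (deriv (y i) t) + K i *ᵥ (y i t) = F t) :
    ∀ Stot : ℝ → ℝ,
      Stot = (fun t =>
          (∑ i, ((1 / 2) * (deriv (y i) t ⬝ᵥ (Λ i *ᵥ deriv (y i) t))
            + (1 / 2) * (y i t ⬝ᵥ (K i *ᵥ y i t))))
          + (1 / 2) * ((∑ i, deriv (y i) t) ⬝ᵥ (M *ᵥ (∑ i, deriv (y i) t)))) →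
      ∀ t : ℝ, 0 ≤ t →
        deriv Stot t
            ≤ -(∑ i, lamMin (hD i).isHermitian * (deriv (y i) t ⬝ᵥ deriv (y i) t)) ∧
        -(∑ i, lamMin (hD i).isHermitian * (deriv (y i) t ⬝ᵥ deriv (y i) t)) ≤ 0 := by
  intro Stot hStot t ht
  have hsymm {A : Matrix (Fin n) (Fin n) ℝ} (hA : A.PosDef) : A.IsSymm :=
    isHermitian_iff_isSymm.mp hA.isHermitian
  have hy' (i) : HasDerivAt (y i) (deriv (y i) t) t :=
    ((hy i).differentiable two_ne_zero t).hasDerivAt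
  have hy'' (i) : HasDerivAt (deriv (y i)) (deriv (deriv (y i)) t) t :=
    ((hy i).differentiable_deriv_two t).hasDerivAt
  have hStot' : HasDerivAt Stot
      (∑ i, (deriv (y i) t ⬝ᵥ (Λ i *ᵥ deriv (deriv (y i)) t)
          + y i t ⬝ᵥ (K i *ᵥ deriv (y i) t))
        + (∑ i, deriv (y i) t) ⬝ᵥ (M *ᵥ ∑ i, deriv (deriv (y i)) t)) t := by
    subst hStot
    exact (HasDerivAt.fun_sum fun i _ =>
        ((hy'' i).half_dotProduct_mulVec_self (hsymm (hΛ i))).add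
          ((hy' i).half_dotProduct_mulVec_self (hsymm (hK i)))).add
      ((HasDerivAt.fun_sum fun i _ => hy'' i).half_dotProduct_mulVec_self (hsymm hM))
  rw [hStot'.deriv, sum_power_add_load_power_eq_neg_dissipation (fun i => hsymm (hK i)) (hF t)
    fun i => hODE i t ht]
  refine ⟨neg_le_neg ?_, neg_nonpos.mpr ?_⟩
  · exact Finset.sum_le_sum fun i _ => lamMin_mul_dotProduct_self_le (hD i).isHermitian _
  · exact Finset.sum_nonneg fun i _ => mul_nonneg (lamMin_nonneg (hD i).posSemidef)
      (by simpa using dotProduct_self_star_nonneg (deriv (y i) t))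

/-- Dissipation inequality for collaborative grasping by `k` AMs
(Section III.D.1).  With `F = −M Σⱼ yⱼ''`, the total storage function
`S_tot = Σᵢ [½ yᵢ'ᵀ Λᵢ yᵢ' + ½ yᵢᵀ Kᵢ yᵢ] + ½ (Σᵢ yᵢ')ᵀ M (Σᵢ yᵢ')` satisfies
`S_tot'(t) ≤ −Σᵢ λ_min(Dᵢ) ‖yᵢ'(t)‖² ≤ 0` for all `t ≥ 0`. -/
theorem stmt_12 {n k : ℕ} (hk : 1 ≤ k)
    (Λ D K : Fin k → Matrix (Fin n) (Fin n) ℝ) (M : Matrix (Fin n) (Fin n) ℝ)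
    (hΛ : ∀ i, (Λ i).PosDef) (hD : ∀ i, (D i).PosDef) (hK : ∀ i, (K i).PosDef)
    (hM : M.PosDef)
    (y : Fin k → ℝ → Fin n → ℝ) (hy : ∀ i, ContDiff ℝ 2 (y i))
    (F : ℝ → Fin n → ℝ)
    (hF : ∀ t : ℝ, F t = -(M *ᵥ (∑ j, deriv (deriv (y j)) t)))
    (hODE : ∀ i, ∀ t : ℝ, 0 ≤ t →
      Λ i *ᵥ (deriv (deriv (y i)) t) + D i *ᵥ (deriv (y i) t) + K i *ᵥ (y i t) = F t) :
    ∀ Stot : ℝ → ℝ,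
      Stot = (fun t =>
          (∑ i, ((1 / 2) * (deriv (y i) t ⬝ᵥ (Λ i *ᵥ deriv (y i) t))
            + (1 / 2) * (y i t ⬝ᵥ (K i *ᵥ y i t))))
          + (1 / 2) * ((∑ i, deriv (y i) t) ⬝ᵥ (M *ᵥ (∑ i, deriv (y i) t)))) →
      ∀ t : ℝ, 0 ≤ t →
        deriv Stot t
            ≤ -(∑ i, lamMin (hD i).isHermitian * (deriv (y i) t ⬝ᵥ deriv (y i) t)) ∧
        -(∑ i, lamMin (hD i).isHermitian * (deriv (y i) t ⬝ᵥ deriv (y i) t)) ≤ 0 :=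
  stmt_12_general Λ D K M hΛ hD hK hM y hy F hF hODE
end

section
/- Let k ≥ 1, and let Λ₁, …, Λ_k, D₁, …, D_k, K₁, …, K_k, M be symmetric positive definite real n×n matrices. Let y₁, …, y_k : [0,∞) → ℝⁿ be C² curves satisfying Λᵢ·yᵢ'' + Dᵢ·yᵢ' + Kᵢ·yᵢ = F for each i, with F = −M·Σⱼ yⱼ''. Then for each i, yᵢ'(t) → 0 as t → ∞ and yᵢ(t) converges to some limit yᵢ* ∈ ℝⁿ. (The extension of the paper's Theorem 3 to an arbitrary number of AMs, Section III.D.1: many AMs collaboratively grasping an object converge to a configuration at which they balance each other.) -/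
/-!
Stacking the manipulators into one state `x = (y₁, …, y_k)` turns the coupled system into a single
damped linear system `𝕄 ẍ + 𝔻 ẋ + 𝕂 x = 0` on `t ≥ 0`, where `𝔻 = diag(Dᵢ)`, `𝕂 = diag(Kᵢ)` and
`𝕄 = diag(Λᵢ) + M ⊗ 𝟙𝟙ᵀ`, all positive definite. The energy `(⟪ẋ, 𝕄 ẋ⟫ + ⟪x, 𝕂 x⟫) / 2` corrected
by a small cross term `ε ⟪x, 𝕄 ẋ⟫` is comparable to `‖x‖² + ‖ẋ‖²` and its derivative is bounded by
a negative multiple of itself, so by Grönwall `x` and `ẋ` decay exponentially; in particular every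
`yᵢ` converges, to `0`.
-/

open Matrix Filter Topology
open scoped Kronecker

theorem le_mul_exp_of_hasDerivAt_le {f f' : ℝ → ℝ} {K a : ℝ}
    (hf : ∀ t, a ≤ t → HasDerivAt f (f' t) t) (hle : ∀ t, a ≤ t → f' t ≤ K * f t)
    {t : ℝ} (ht : a ≤ t) : f t ≤ f a * Real.exp (K * (t - a)) := by
  rw [← gronwallBound_ε0]
  refine le_gronwallBound_of_liminf_deriv_right_le (f' := f') (b := t) ?_ ?_ le_rfl ?_ t
    ⟨ht, le_rfl⟩
  · exact fun s hs => (hf s hs.1).continuousAt.continuousWithinAt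
  · exact fun s hs _ hr => (hf s hs.1).hasDerivWithinAt.liminf_right_slope_le hr
  · simpa using fun s hs _ => hle s hs

theorem tendsto_zero_of_sq_norm_le {α E : Type*} [SeminormedAddCommGroup E] {l : Filter α}
    {f : α → E} {g : α → ℝ} (hg : Tendsto g l (𝓝 0)) (hfg : ∀ t, ‖f t‖ ^ 2 ≤ g t) :
    Tendsto f l (𝓝 0) := by
  have hsqrt : Tendsto (fun t => √(g t)) l (𝓝 0) := by simpa using hg.sqrt
  exact squeeze_zero_norm
    (fun t => (Real.le_sqrt (norm_nonneg _) ((sq_nonneg _).trans (hfg t))).2 (hfg t)) hsqrt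

namespace Matrix

variable {ι : Type*} [Fintype ι]

theorem IsHermitian.dotProduct_mulVec_comm {A : Matrix ι ι ℝ} (hA : A.IsHermitian) (x w : ι → ℝ) :
    x ⬝ᵥ (A *ᵥ w) = w ⬝ᵥ (A *ᵥ x) := by
  rw [dotProduct_mulVec, ← mulVec_transpose, dotProduct_comm,
    ← conjTranspose_eq_transpose_of_trivial, hA.eq]

theorem PosDef.eventually_mul_sq_norm_le {A : Matrix ι ι ℝ} (hA : A.PosDef) :
    ∀ᶠ c in 𝓝[>] 0, ∀ x : ι → ℝ, c * ‖x‖ ^ 2 ≤ x ⬝ᵥ (A *ᵥ x) := by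
  suffices ∃ c > 0, ∀ x : ι → ℝ, c * ‖x‖ ^ 2 ≤ x ⬝ᵥ (A *ᵥ x) by
    obtain ⟨c, hc, h⟩ := this
    filter_upwards [Ioc_mem_nhdsGT hc] with c' hc' x
    exact le_trans (by gcongr; exact hc'.2) (h x)
  classical
  rcases isEmpty_or_nonempty ι with _ | ⟨⟨i⟩⟩
  · exact ⟨1, one_pos, fun x => by simp [Subsingleton.elim x 0]⟩
  have hsphere : (Metric.sphere (0 : ι → ℝ) 1).Nonempty :=
    ⟨Pi.single i 1, by simp [Pi.norm_single]⟩
  obtain ⟨u, hu, hmin⟩ := (isCompact_sphere (0 : ι → ℝ) 1).exists_isMinOn hsphere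
    (by fun_prop : Continuous fun x : ι → ℝ => x ⬝ᵥ (A *ᵥ x)).continuousOn
  refine ⟨u ⬝ᵥ (A *ᵥ u), ?_, fun x => ?_⟩
  · simpa using hA.dotProduct_mulVec_pos (ne_zero_of_mem_unit_sphere ⟨u, hu⟩)
  rcases eq_or_ne x 0 with rfl | hx
  · simp
  have hx' : 0 < ‖x‖ := norm_pos_iff.2 hx
  have h : u ⬝ᵥ (A *ᵥ u) ≤ (‖x‖⁻¹ • x) ⬝ᵥ (A *ᵥ (‖x‖⁻¹ • x)) :=
    hmin (show ‖x‖⁻¹ • x ∈ Metric.sphere 0 1 by simp [norm_smul, hx'.ne'])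
  simp only [mulVec_smul, dotProduct_smul, smul_dotProduct, smul_eq_mul] at h
  calc u ⬝ᵥ (A *ᵥ u) * ‖x‖ ^ 2 ≤ ‖x‖⁻¹ * (‖x‖⁻¹ * (x ⬝ᵥ (A *ᵥ x))) * ‖x‖ ^ 2 := by gcongr
    _ = x ⬝ᵥ (A *ᵥ x) := by field_simp

theorem eventually_abs_dotProduct_mulVec_le (A : Matrix ι ι ℝ) :
    ∀ᶠ C in atTop, ∀ x w : ι → ℝ, |x ⬝ᵥ (A *ᵥ w)| ≤ C * ‖x‖ * ‖w‖ := by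
  classical
  let B := (toLinearMap₂' ℝ A : (ι → ℝ) →ₗ[ℝ] (ι → ℝ) →ₗ[ℝ] ℝ).toContinuousBilinearMap
  filter_upwards [eventually_ge_atTop ‖B‖] with C hC x w
  calc |x ⬝ᵥ (A *ᵥ w)| = ‖B x w‖ := by simp [B, toLinearMap₂'_apply']
    _ ≤ ‖B‖ * ‖x‖ * ‖w‖ := B.le_opNorm₂ x w
    _ ≤ C * ‖x‖ * ‖w‖ := by gcongr

section Block

variable {κ R : Type*} [Fintype κ]

theorem blockDiagonal_mulVec_apply [DecidableEq κ] [NonUnitalNonAssocSemiring R]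
    (B : κ → Matrix ι ι R) (x : ι × κ → R) (a : ι) (i : κ) :
    (blockDiagonal B *ᵥ x) (a, i) = (B i *ᵥ fun b => x (b, i)) a := by
  simp [mulVec, dotProduct, blockDiagonal_apply, Fintype.sum_prod_type]

theorem dotProduct_blockDiagonal_mulVec [DecidableEq κ] [NonUnitalNonAssocSemiring R]
    (B : κ → Matrix ι ι R) (y x : ι × κ → R) :
    y ⬝ᵥ (blockDiagonal B *ᵥ x) = ∑ i, (fun b => y (b, i)) ⬝ᵥ (B i *ᵥ fun b => x (b, i)) := by
  simp only [dotProduct, Fintype.sum_prod_type_right, blockDiagonal_mulVec_apply]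

theorem kronecker_ones_mulVec_apply [Semiring R] (M : Matrix ι ι R) (x : ι × κ → R) (a : ι)
    (i : κ) : ((M ⊗ₖ of fun _ _ : κ => (1 : R)) *ᵥ x) (a, i) = (M *ᵥ ∑ j, fun b => x (b, j)) a := by
  simp [mulVec, dotProduct, Fintype.sum_prod_type, Finset.mul_sum]

theorem posSemidef_ones : (of fun _ _ : κ => (1 : ℝ)).PosSemidef := by
  simpa [vecMulVec] using posSemidef_vecMulVec_self_star (1 : κ → ℝ)

theorem PosDef.blockDiagonal [DecidableEq κ] {B : κ → Matrix ι ι ℝ} (hB : ∀ i, (B i).PosDef) :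
    (blockDiagonal B).PosDef := by
  refine .of_dotProduct_mulVec_pos (isHermitian_blockDiagonal_iff.2 fun i => (hB i).isHermitian)
    fun x hx => ?_
  obtain ⟨⟨a, i⟩, hai⟩ := Function.ne_iff.1 hx
  have hslice : (fun b => x (b, i)) ≠ 0 := fun h => hai (congrFun h a)
  rw [star_trivial, dotProduct_blockDiagonal_mulVec]
  refine Finset.sum_pos' (fun j _ => ?_) ⟨i, Finset.mem_univ _, ?_⟩
  · simpa using (hB j).posSemidef.dotProduct_mulVec_nonneg fun b => x (b, j)
  · simpa using (hB i).dotProduct_mulVec_pos hslice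

end Block

end Matrix

theorem HasDerivAt.dotProduct_mulVec {ι : Type*} [Fintype ι] (A : Matrix ι ι ℝ)
    {x w : ℝ → ι → ℝ} {x' w' : ι → ℝ} {t : ℝ}
    (hx : HasDerivAt x x' t) (hw : HasDerivAt w w' t) :
    HasDerivAt (fun s => x s ⬝ᵥ (A *ᵥ w s)) (x' ⬝ᵥ (A *ᵥ w t) + x t ⬝ᵥ (A *ᵥ w')) t := by
  classical
  let B := (toLinearMap₂' ℝ A : (ι → ℝ) →ₗ[ℝ] (ι → ℝ) →ₗ[ℝ] ℝ).toContinuousBilinearMap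
  simpa [B, toLinearMap₂'_apply', add_comm] using
    B.hasDerivAt_of_bilinear (fun _ => hx) (fun _ => hw)

namespace DampedLinearSystem

variable {ι : Type*} [Fintype ι] {M D K : Matrix ι ι ℝ} {c C ε : ℝ}

/-- The energy plus a small cross term `ε ⟪x, M v⟫`, which makes the derivative along solutions
negative definite in the position as well as in the velocity. -/
noncomputable def lyapunov (M K : Matrix ι ι ℝ) (ε : ℝ) (x v : ι → ℝ) : ℝ :=
  (v ⬝ᵥ (M *ᵥ v) + x ⬝ᵥ (K *ᵥ x)) / 2 + ε * (x ⬝ᵥ (M *ᵥ v))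

noncomputable def lyapunovDeriv (M D K : Matrix ι ι ℝ) (ε : ℝ) (x v : ι → ℝ) : ℝ :=
  -(v ⬝ᵥ (D *ᵥ v)) + ε * (v ⬝ᵥ (M *ᵥ v)) - ε * (x ⬝ᵥ (D *ᵥ v)) - ε * (x ⬝ᵥ (K *ᵥ x))

theorem hasDerivAt_lyapunov (hM : M.IsHermitian) (hK : K.IsHermitian) (ε : ℝ)
    {x v : ℝ → ι → ℝ} {a : ι → ℝ} {t : ℝ} (hx : HasDerivAt x (v t) t) (hv : HasDerivAt v a t)
    (hsys : M *ᵥ a + D *ᵥ v t + K *ᵥ x t = 0) :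
    HasDerivAt (fun s => lyapunov M K ε (x s) (v s)) (lyapunovDeriv M D K ε (x t) (v t)) t := by
  have hMa : M *ᵥ a = -(D *ᵥ v t + K *ᵥ x t) := by
    rw [add_assoc] at hsys
    exact eq_neg_of_add_eq_zero_left hsys
  refine ((((hv.dotProduct_mulVec M hv).add (hx.dotProduct_mulVec K hx)).div_const 2).add
    ((hx.dotProduct_mulVec M hv).const_mul ε)).congr_deriv ?_
  rw [hM.dotProduct_mulVec_comm a, hK.dotProduct_mulVec_comm (x t) (v t), hMa]
  simp only [lyapunovDeriv, dotProduct_neg, dotProduct_add]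
  ring

theorem mul_le_lyapunov (hc : 0 ≤ c) (hMc : ∀ v, c * ‖v‖ ^ 2 ≤ v ⬝ᵥ (M *ᵥ v))
    (hKc : ∀ x, c * ‖x‖ ^ 2 ≤ x ⬝ᵥ (K *ᵥ x)) (hMC : ∀ x v, |x ⬝ᵥ (M *ᵥ v)| ≤ C * ‖x‖ * ‖v‖)
    (hε : 0 ≤ ε) (hεC : 2 * ε * C ≤ c) (x v : ι → ℝ) :
    c / 4 * (‖x‖ ^ 2 + ‖v‖ ^ 2) ≤ lyapunov M K ε x v := by
  have hcross : -(c / 2 * (‖x‖ * ‖v‖)) ≤ ε * (x ⬝ᵥ (M *ᵥ v)) := by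
    have h := mul_le_mul_of_nonneg_left (neg_le_of_abs_le (hMC x v)) hε
    have h' := mul_le_mul_of_nonneg_right hεC (by positivity : 0 ≤ ‖x‖ * ‖v‖)
    linarith
  unfold lyapunov
  nlinarith [hMc v, hKc x, mul_le_mul_of_nonneg_left (two_mul_le_add_sq ‖x‖ ‖v‖) hc]

theorem lyapunov_le_mul (hC : 0 ≤ C) (hMC : ∀ x v, |x ⬝ᵥ (M *ᵥ v)| ≤ C * ‖x‖ * ‖v‖)
    (hKC : ∀ x v, |x ⬝ᵥ (K *ᵥ v)| ≤ C * ‖x‖ * ‖v‖) (hε0 : 0 ≤ ε) (hε1 : ε ≤ 1) (x v : ι → ℝ) :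
    lyapunov M K ε x v ≤ C * (‖x‖ ^ 2 + ‖v‖ ^ 2) := by
  have hcross : ε * (x ⬝ᵥ (M *ᵥ v)) ≤ C * (‖x‖ * ‖v‖) := by
    have h := mul_le_mul_of_nonneg_left (le_of_abs_le (hMC x v)) hε0
    have h' := mul_le_mul_of_nonneg_right hε1 (by positivity : 0 ≤ C * ‖x‖ * ‖v‖)
    linarith
  unfold lyapunov
  nlinarith [le_of_abs_le (hMC v v), le_of_abs_le (hKC x x),
    mul_le_mul_of_nonneg_left (two_mul_le_add_sq ‖x‖ ‖v‖) hC]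

theorem lyapunovDeriv_le (hc : 0 < c) (hDc : ∀ v, c * ‖v‖ ^ 2 ≤ v ⬝ᵥ (D *ᵥ v))
    (hKc : ∀ x, c * ‖x‖ ^ 2 ≤ x ⬝ᵥ (K *ᵥ x)) (hMC : ∀ x v, |x ⬝ᵥ (M *ᵥ v)| ≤ C * ‖x‖ * ‖v‖)
    (hDC : ∀ x v, |x ⬝ᵥ (D *ᵥ v)| ≤ C * ‖x‖ * ‖v‖) (hε0 : 0 ≤ ε) (hε1 : ε ≤ 1)
    (hε : ε * (2 * c * C + C ^ 2) ≤ c ^ 2) (x v : ι → ℝ) :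
    lyapunovDeriv M D K ε x v ≤ -(ε * c / 2) * (‖x‖ ^ 2 + ‖v‖ ^ 2) := by
  have hMv : ε * (v ⬝ᵥ (M *ᵥ v)) ≤ ε * (C * ‖v‖ ^ 2) := by
    have := le_of_abs_le (hMC v v)
    gcongr
    linarith
  have hDxv : -(ε * (x ⬝ᵥ (D *ᵥ v))) ≤ ε * (C * ‖x‖ * ‖v‖) := by
    have := neg_le_of_abs_le (hDC x v)
    nlinarith
  have hamgm := mul_le_mul_of_nonneg_left (two_mul_le_add_sq (c * ‖x‖) (C * ‖v‖)) hε0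
  have hKx := mul_le_mul_of_nonneg_left (hKc x) hε0
  refine le_of_mul_le_mul_left ?_ (by positivity : 0 < 2 * c)
  unfold lyapunovDeriv
  nlinarith [hDc v, mul_le_mul_of_nonneg_right hε1 (by positivity : 0 ≤ c ^ 2 * ‖v‖ ^ 2),
    mul_le_mul_of_nonneg_right hε (by positivity : 0 ≤ ‖v‖ ^ 2)]

theorem tendsto_nhds_zero (hM : M.PosDef) (hD : D.PosDef) (hK : K.PosDef)
    {x v a : ℝ → ι → ℝ} (hx : ∀ t, 0 ≤ t → HasDerivAt x (v t) t)
    (hv : ∀ t, 0 ≤ t → HasDerivAt v (a t) t)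
    (hsys : ∀ t, 0 ≤ t → M *ᵥ a t + D *ᵥ v t + K *ᵥ x t = 0) :
    Tendsto x atTop (𝓝 0) ∧ Tendsto v atTop (𝓝 0) := by
  obtain ⟨c, hMc, hDc, hKc, hc⟩ := (hM.eventually_mul_sq_norm_le.and
    (hD.eventually_mul_sq_norm_le.and (hK.eventually_mul_sq_norm_le.and
      eventually_mem_nhdsWithin))).exists
  obtain ⟨C, hMC, hDC, hKC, hC⟩ := ((eventually_abs_dotProduct_mulVec_le M).and
    ((eventually_abs_dotProduct_mulVec_le D).and ((eventually_abs_dotProduct_mulVec_le K).and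
      (eventually_gt_atTop 0)))).exists
  rw [Set.mem_Ioi] at hc
  set ε := (c / (c + C)) ^ 2
  have hε : ε * (c + C) ^ 2 = c ^ 2 := by
    simp only [ε]
    field_simp
  have hε0 : 0 ≤ ε := by positivity
  have hε1 : ε ≤ 1 := le_of_mul_le_mul_right (by nlinarith) (by positivity : 0 < (c + C) ^ 2)
  have hεC : 2 * ε * C ≤ c :=
    le_of_mul_le_mul_left
      (by nlinarith [mul_nonneg hε0 (add_nonneg (sq_nonneg c) (sq_nonneg C))]) hc
  have hεc : ε * (2 * c * C + C ^ 2) ≤ c ^ 2 := by nlinarith [mul_nonneg hε0 (sq_nonneg c)]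
  set V := fun t => lyapunov M K ε (x t) (v t)
  set α := ε * c / (2 * C)
  have hα : 0 < α := by positivity
  have hV' : ∀ s, 0 ≤ s → HasDerivAt V (lyapunovDeriv M D K ε (x s) (v s)) s := fun s hs =>
    hasDerivAt_lyapunov hM.isHermitian hK.isHermitian ε (hx s hs) (hv s hs) (hsys s hs)
  have hV'_le : ∀ s, 0 ≤ s → lyapunovDeriv M D K ε (x s) (v s) ≤ -α * V s := by
    intro s _
    have hαC : α * C = ε * c / 2 := by simp only [α]; field_simp
    calc lyapunovDeriv M D K ε (x s) (v s) ≤ -(ε * c / 2) * (‖x s‖ ^ 2 + ‖v s‖ ^ 2) :=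
          lyapunovDeriv_le hc hDc hKc hMC hDC hε0 hε1 hεc _ _
      _ = -α * (C * (‖x s‖ ^ 2 + ‖v s‖ ^ 2)) := by rw [← hαC]; ring
      _ ≤ -α * V s := by
          have := lyapunov_le_mul hC.le hMC hKC hε0 hε1 (x s) (v s)
          nlinarith
  have hdecay : ∀ t, 0 ≤ t → V t ≤ V 0 * Real.exp (-α * t) := fun t ht =>
    (le_mul_exp_of_hasDerivAt_le hV' hV'_le ht).trans_eq (by rw [sub_zero])
  have hbound : Tendsto (fun t => 4 / c * (V 0 * Real.exp (-α * t))) atTop (𝓝 0) := by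
    simpa using ((Real.tendsto_exp_atBot.comp
      (tendsto_id.const_mul_atTop_of_neg (neg_neg_of_pos hα))).const_mul (V 0)).const_mul (4 / c)
  have hN : Tendsto (fun t => ‖x t‖ ^ 2 + ‖v t‖ ^ 2) atTop (𝓝 0) := by
    refine squeeze_zero' (.of_forall fun t => by positivity) ?_ hbound
    filter_upwards [eventually_ge_atTop 0] with t ht
    calc ‖x t‖ ^ 2 + ‖v t‖ ^ 2 = 4 / c * (c / 4 * (‖x t‖ ^ 2 + ‖v t‖ ^ 2)) := by field_simp
      _ ≤ 4 / c * V t := by gcongr; exact mul_le_lyapunov hc.le hMc hKc hMC hε0 hεC _ _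
      _ ≤ 4 / c * (V 0 * Real.exp (-α * t)) := by gcongr; exact hdecay t ht
  exact ⟨tendsto_zero_of_sq_norm_le hN fun t => le_add_of_nonneg_right (sq_nonneg _),
    tendsto_zero_of_sq_norm_le hN fun t => le_add_of_nonneg_left (sq_nonneg _)⟩

end DampedLinearSystem


theorem stmt_14_general {n k : ℕ}
    (Λ D K : Fin k → Matrix (Fin n) (Fin n) ℝ) (M : Matrix (Fin n) (Fin n) ℝ)
    (hΛ : ∀ i, (Λ i).PosDef) (hD : ∀ i, (D i).PosDef) (hK : ∀ i, (K i).PosDef)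
    (hM : M.PosDef)
    (y : Fin k → ℝ → Fin n → ℝ) (hy : ∀ i, ContDiff ℝ 2 (y i))
    (F : ℝ → Fin n → ℝ)
    (hF : ∀ t : ℝ, F t = -(M *ᵥ (∑ j, deriv (deriv (y j)) t)))
    (hODE : ∀ i, ∀ t : ℝ, 0 ≤ t →
      Λ i *ᵥ (deriv (deriv (y i)) t) + D i *ᵥ (deriv (y i) t) + K i *ᵥ (y i t) = F t) :
    ∀ i, Tendsto (deriv (y i)) atTop (𝓝 0) ∧
      ∃ ystar : Fin n → ℝ, Tendsto (y i) atTop (𝓝 ystar) := by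
  let stack (z : Fin k → ℝ → Fin n → ℝ) (t : ℝ) (p : Fin n × Fin k) : ℝ := z p.2 t p.1
  have hstack (z : Fin k → ℝ → Fin n → ℝ) (hz : ∀ i, Differentiable ℝ (z i)) (t : ℝ) :
      HasDerivAt (stack z) (stack (fun i => deriv (z i)) t) t :=
    hasDerivAt_pi.2 fun p => hasDerivAt_pi.1 (hz p.2 t).hasDerivAt p.1
  have hunstack (z : Fin k → ℝ → Fin n → ℝ) (hz : Tendsto (stack z) atTop (𝓝 0)) (i : Fin k) :
      Tendsto (z i) atTop (𝓝 0) :=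
    tendsto_pi_nhds.2 fun a => tendsto_pi_nhds.1 hz (a, i)
  have hsys (t : ℝ) (ht : 0 ≤ t) :
      (blockDiagonal Λ + M ⊗ₖ of fun _ _ => 1) *ᵥ stack (fun i => deriv (deriv (y i))) t
        + blockDiagonal D *ᵥ stack (fun i => deriv (y i)) t + blockDiagonal K *ᵥ stack y t = 0 := by
    funext ⟨a, i⟩
    have := congrFun (hODE i t ht) a
    simp only [hF, Pi.add_apply, Pi.neg_apply] at this
    simp only [add_mulVec, Pi.add_apply, blockDiagonal_mulVec_apply, kronecker_ones_mulVec_apply,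
      stack, Pi.zero_apply]
    linarith
  obtain ⟨hX, hV⟩ := DampedLinearSystem.tendsto_nhds_zero
    ((PosDef.blockDiagonal hΛ).add_posSemidef (hM.posSemidef.kronecker posSemidef_ones))
    (PosDef.blockDiagonal hD) (PosDef.blockDiagonal hK)
    (fun t _ => hstack y (fun i => (hy i).differentiable two_ne_zero) t)
    (fun t _ => hstack _ (fun i => (hy i).differentiable_deriv_two) t) hsys
  exact fun i => ⟨hunstack (fun i => deriv (y i)) hV i, 0, hunstack y hX i⟩

/-- Extension of Theorem 3 to an arbitrary number of AMs
(Section III.D.1).  With `F = −M Σⱼ yⱼ''`, every velocity `yᵢ'` tends to `0`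
and every configuration `yᵢ` converges to some limit `yᵢ*`. -/
theorem stmt_14 {n k : ℕ} (hk : 1 ≤ k)
    (Λ D K : Fin k → Matrix (Fin n) (Fin n) ℝ) (M : Matrix (Fin n) (Fin n) ℝ)
    (hΛ : ∀ i, (Λ i).PosDef) (hD : ∀ i, (D i).PosDef) (hK : ∀ i, (K i).PosDef)
    (hM : M.PosDef)
    (y : Fin k → ℝ → Fin n → ℝ) (hy : ∀ i, ContDiff ℝ 2 (y i))
    (F : ℝ → Fin n → ℝ)
    (hF : ∀ t : ℝ, F t = -(M *ᵥ (∑ j, deriv (deriv (y j)) t)))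
    (hODE : ∀ i, ∀ t : ℝ, 0 ≤ t →
      Λ i *ᵥ (deriv (deriv (y i)) t) + D i *ᵥ (deriv (y i) t) + K i *ᵥ (y i t) = F t) :
    ∀ i, Tendsto (deriv (y i)) atTop (𝓝 0) ∧
      ∃ ystar : Fin n → ℝ, Tendsto (y i) atTop (𝓝 ystar) :=
  stmt_14_general Λ D K M hΛ hD hK hM y hy F hF hODE
end
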